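/- arXiv:1005.2104 — 2 statements merged into one kernel-verified Lean document; each statement's English description precedes it below -/
import Mathlib

section
/- For every real k, |J⁰(k)| ≤ (1 + k²)^(-1/4). -/
open MeasureTheory Real

/-- The zeroth-order Bessel function `J⁰(k) = (1/π) ∫₀^π cos(k cos θ) dθ`. -/
noncomputable def J0 (k : ℝ) : ℝ :=
  (1 / Real.pi) * ∫ θ in (0:ℝ)..Real.pi, Real.cos (k * Real.cos θ)

/-!
The Taylor polynomials of `cos` and `sin` bound them alternately from above and below; integrating
termwise, `J₀` and `J₁ = -J₀'` lie between consecutive partial sums of their power series.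

For `|k| ≤ 2` this gives `0 ≤ 1 - k²/4 ≤ J₀(k) ≤ (1 - k²/8)²`, and
`(1 - x/8)⁸ (1 + x) ≤ e⁻ˣ eˣ = 1`.

For `k ≥ 2` we use Bessel's equation `J₁' = J₀ - J₁/k`. The energy
`E(k) = (k + 1)(J₀² + J₁²) - (1 + 1/k) J₀ J₁` is nonincreasing on `[2, ∞)` (since `|J₀J₁|` is at most
`(J₀² + J₁²)/2`), it dominates `(k + 1/(2k)) J₀² ≥ √(1 + k²) J₀²`, and the series bounds at
`k = 2` give `E(2) ≤ 1`.
-/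

open Finset Nat

noncomputable def cosTaylor (n : ℕ) (x : ℝ) : ℝ :=
  ∑ i ∈ range n, (-1) ^ i * x ^ (2 * i) / (2 * i)!

noncomputable def sinTaylor (n : ℕ) (x : ℝ) : ℝ :=
  ∑ i ∈ range n, (-1) ^ i * x ^ (2 * i + 1) / (2 * i + 1)!

theorem hasDerivAt_sinTaylor (n : ℕ) (x : ℝ) : HasDerivAt (sinTaylor n) (cosTaylor n x) x := by
  refine (HasDerivAt.fun_sum (u := range n) fun i _ =>
    ((hasDerivAt_pow (2 * i + 1) x).const_mul ((-1 : ℝ) ^ i)).div_const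
      ((2 * i + 1)! : ℝ)).congr_deriv (sum_congr rfl fun i _ => ?_)
  rw [Nat.factorial_succ]
  push_cast
  field_simp

theorem hasDerivAt_cosTaylor_succ (n : ℕ) (x : ℝ) :
    HasDerivAt (cosTaylor (n + 1)) (-sinTaylor n x) x := by
  refine (HasDerivAt.fun_sum (u := range (n + 1)) fun i _ =>
    ((hasDerivAt_pow (2 * i) x).const_mul ((-1 : ℝ) ^ i)).div_const
      ((2 * i)! : ℝ)).congr_deriv ?_
  rw [sum_range_succ', sinTaylor, ← sum_neg_distrib]
  simp only [mul_zero, Nat.cast_zero, zero_mul, zero_div, add_zero]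
  refine sum_congr rfl fun i _ => ?_
  rw [show 2 * (i + 1) = 2 * i + 1 + 1 by ring, Nat.factorial_succ, Nat.add_sub_cancel]
  push_cast
  field_simp
  ring

theorem nonneg_of_hasDerivAt_nonneg {f f' : ℝ → ℝ} (hf : ∀ x, HasDerivAt f (f' x) x)
    (h0 : f 0 = 0) (hf' : ∀ x, 0 ≤ x → 0 ≤ f' x) {x : ℝ} (hx : 0 ≤ x) : 0 ≤ f x := by
  have hmono : MonotoneOn f (Set.Ici 0) :=
    monotoneOn_of_hasDerivWithinAt_nonneg (convex_Ici 0)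
      (fun y _ => (hf y).continuousAt.continuousWithinAt)
      (fun y _ => (hf y).hasDerivWithinAt)
      (fun y hy => hf' y (interior_subset hy))
  simpa [h0] using hmono Set.self_mem_Ici hx hx

theorem cosTaylor_zero_right (n : ℕ) : cosTaylor (n + 1) 0 = 1 := by
  simp [cosTaylor, sum_range_succ']

theorem sinTaylor_zero_right (n : ℕ) : sinTaylor n 0 = 0 := by
  simp [sinTaylor]

theorem cosTaylor_neg (n : ℕ) (x : ℝ) : cosTaylor n (-x) = cosTaylor n x := by
  simp [cosTaylor, pow_mul]

theorem sinTaylor_neg (n : ℕ) (x : ℝ) : sinTaylor n (-x) = -sinTaylor n x := by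
  simp [sinTaylor, pow_succ, pow_mul, ← sum_neg_distrib, neg_div]

theorem sin_sub_sinTaylor_alternating_of_cos {n : ℕ}
    (h : ∀ x, 0 ≤ x → 0 ≤ (-1) ^ n * (cos x - cosTaylor n x)) {x : ℝ} (hx : 0 ≤ x) :
    0 ≤ (-1) ^ n * (sin x - sinTaylor n x) :=
  nonneg_of_hasDerivAt_nonneg
    (fun y => ((hasDerivAt_sin y).sub (hasDerivAt_sinTaylor n y)).const_mul _)
    (by simp [sinTaylor_zero_right]) h hx

theorem cos_sub_cosTaylor_succ_alternating_of_sin {n : ℕ}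
    (h : ∀ x, 0 ≤ x → 0 ≤ (-1) ^ n * (sin x - sinTaylor n x)) {x : ℝ} (hx : 0 ≤ x) :
    0 ≤ (-1) ^ (n + 1) * (cos x - cosTaylor (n + 1) x) :=
  nonneg_of_hasDerivAt_nonneg
    (fun y => (((hasDerivAt_cos y).sub (hasDerivAt_cosTaylor_succ n y)).const_mul _).congr_deriv
      (by ring))
    (by simp [cosTaylor_zero_right]) h hx

theorem cos_sub_cosTaylor_alternating_of_nonneg (n : ℕ) :
    ∀ x, 0 ≤ x → 0 ≤ (-1) ^ (n + 1) * (cos x - cosTaylor (n + 1) x) := by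
  induction n with
  | zero => simpa [cosTaylor] using fun x _ => cos_le_one x
  | succ n ih =>
    exact fun x => cos_sub_cosTaylor_succ_alternating_of_sin
      (fun _ => sin_sub_sinTaylor_alternating_of_cos ih)

theorem cos_sub_cosTaylor_alternating (n : ℕ) (x : ℝ) :
    0 ≤ (-1) ^ (n + 1) * (cos x - cosTaylor (n + 1) x) := by
  rcases le_total 0 x with hx | hx
  · exact cos_sub_cosTaylor_alternating_of_nonneg n x hx
  · simpa [cosTaylor_neg] using cos_sub_cosTaylor_alternating_of_nonneg n (-x) (neg_nonneg.2 hx)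

/-- Multiplying by `x` makes both sides even, so the bound holds on all of `ℝ`. -/
theorem mul_sin_sub_sinTaylor_alternating (n : ℕ) (x : ℝ) :
    0 ≤ (-1) ^ (n + 1) * (x * (sin x - sinTaylor (n + 1) x)) := by
  have key {y : ℝ} (hy : 0 ≤ y) : 0 ≤ (-1) ^ (n + 1) * (sin y - sinTaylor (n + 1) y) :=
    sin_sub_sinTaylor_alternating_of_cos (cos_sub_cosTaylor_alternating_of_nonneg n) hy
  rcases le_total 0 x with hx | hx
  · rw [mul_left_comm]
    exact mul_nonneg hx (key hx)
  · have := mul_nonneg (neg_nonneg.2 hx) (key (neg_nonneg.2 hx))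
    rw [sin_neg, sinTaylor_neg] at this
    linarith

theorem integral_cos_pow_two_mul (i : ℕ) :
    ∫ θ in (0 : ℝ)..π, cos θ ^ (2 * i) = π * (2 * i)! / (4 ^ i * (i ! : ℝ) ^ 2) := by
  induction i with
  | zero => simp
  | succ i ih =>
    rw [show 2 * (i + 1) = 2 * i + 2 by ring, integral_cos_pow, ih]
    simp only [sin_zero, sin_pi, mul_zero, sub_zero, zero_div, zero_add]
    rw [Nat.factorial_succ (2 * i + 1), Nat.factorial_succ (2 * i), Nat.factorial_succ i]
    push_cast
    field_simp
    ring

noncomputable def J1 (k : ℝ) : ℝ := (1 / π) * ∫ θ in (0 : ℝ)..π, cos θ * sin (k * cos θ)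

noncomputable def J0Taylor (n : ℕ) (k : ℝ) : ℝ :=
  ∑ i ∈ range n, (-1) ^ i * (k / 2) ^ (2 * i) / (i ! : ℝ) ^ 2

noncomputable def J1Taylor (n : ℕ) (k : ℝ) : ℝ :=
  ∑ i ∈ range n, (-1) ^ i * (k / 2) ^ (2 * i + 1) / (i ! * (i + 1)! : ℝ)

theorem continuous_cosTaylor (n : ℕ) : Continuous (cosTaylor n) := by
  unfold cosTaylor; fun_prop

theorem continuous_sinTaylor (n : ℕ) : Continuous (sinTaylor n) := by
  unfold sinTaylor; fun_prop

theorem integral_cosTaylor_mul_cos (n : ℕ) (k : ℝ) :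
    ∫ θ in (0 : ℝ)..π, cosTaylor n (k * cos θ) = π * J0Taylor n k := by
  simp only [cosTaylor, J0Taylor, mul_sum]
  rw [intervalIntegral.integral_finsetSum fun i _ => by
    apply Continuous.intervalIntegrable; fun_prop]
  refine sum_congr rfl fun i _ => ?_
  have hθ : ∀ θ, (-1) ^ i * (k * cos θ) ^ (2 * i) / (2 * i)! =
      (-1) ^ i * k ^ (2 * i) / (2 * i)! * cos θ ^ (2 * i) := fun θ => by ring
  simp only [hθ, intervalIntegral.integral_const_mul, integral_cos_pow_two_mul]
  rw [div_pow, pow_mul (2 : ℝ)]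
  field_simp
  norm_num

theorem integral_mul_sinTaylor_mul_cos (n : ℕ) (k : ℝ) :
    ∫ θ in (0 : ℝ)..π, k * cos θ * sinTaylor n (k * cos θ) = π * (k * J1Taylor n k) := by
  simp only [sinTaylor, J1Taylor, mul_sum]
  rw [intervalIntegral.integral_finsetSum fun i _ => by
    apply Continuous.intervalIntegrable; fun_prop]
  refine sum_congr rfl fun i _ => ?_
  have hθ : ∀ θ, k * cos θ * ((-1) ^ i * (k * cos θ) ^ (2 * i + 1) / (2 * i + 1)!) =
      (-1) ^ i * k ^ (2 * (i + 1)) / (2 * i + 1)! * cos θ ^ (2 * (i + 1)) := fun θ => by ring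
  simp only [hθ, intervalIntegral.integral_const_mul, integral_cos_pow_two_mul]
  rw [show 2 * (i + 1) = 2 * i + 1 + 1 by ring, Nat.factorial_succ (2 * i + 1),
    Nat.factorial_succ i, div_pow, pow_succ (2 : ℝ), pow_mul (2 : ℝ)]
  push_cast
  field_simp
  ring

theorem J0_sub_J0Taylor_alternating (n : ℕ) (k : ℝ) :
    0 ≤ (-1) ^ (n + 1) * (J0 k - J0Taylor (n + 1) k) := by
  have hJ : J0 k - J0Taylor (n + 1) k =
      π⁻¹ * ∫ θ in (0 : ℝ)..π, cos (k * cos θ) - cosTaylor (n + 1) (k * cos θ) := by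
    rw [intervalIntegral.integral_sub (by apply Continuous.intervalIntegrable; fun_prop)
      (by have := continuous_cosTaylor (n + 1); apply Continuous.intervalIntegrable; fun_prop),
      integral_cosTaylor_mul_cos, J0]
    field_simp
  rw [hJ, mul_left_comm, ← intervalIntegral.integral_const_mul]
  exact mul_nonneg (inv_nonneg.2 pi_pos.le) (intervalIntegral.integral_nonneg pi_pos.le
    fun θ _ => cos_sub_cosTaylor_alternating n (k * cos θ))

theorem mul_J1_sub_J1Taylor_alternating (n : ℕ) (k : ℝ) :
    0 ≤ (-1) ^ (n + 1) * (k * (J1 k - J1Taylor (n + 1) k)) := by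
  have hJ : k * (J1 k - J1Taylor (n + 1) k) = π⁻¹ * ∫ θ in (0 : ℝ)..π,
      k * cos θ * (sin (k * cos θ) - sinTaylor (n + 1) (k * cos θ)) := by
    simp only [mul_sub]
    rw [intervalIntegral.integral_sub (by apply Continuous.intervalIntegrable; fun_prop)
      (by have := continuous_sinTaylor (n + 1); apply Continuous.intervalIntegrable; fun_prop),
      integral_mul_sinTaylor_mul_cos, J1]
    simp_rw [mul_assoc, intervalIntegral.integral_const_mul]
    field_simp
  rw [hJ, mul_left_comm, ← intervalIntegral.integral_const_mul]
  exact mul_nonneg (inv_nonneg.2 pi_pos.le) (intervalIntegral.integral_nonneg pi_pos.le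
    fun θ _ => mul_sin_sub_sinTaylor_alternating n (k * cos θ))

theorem hasDerivAt_integral_mul_comp_mul {a b C : ℝ} {w c g g' : ℝ → ℝ} (hw : Continuous w)
    (hc : Continuous c) (hg : ∀ x, HasDerivAt g (g' x) x) (hg' : Continuous g')
    (hC : ∀ x, |g' x| ≤ C) (k : ℝ) :
    HasDerivAt (fun k => ∫ θ in a..b, w θ * g (k * c θ))
      (∫ θ in a..b, w θ * c θ * g' (k * c θ)) k := by
  have hg_cont : Continuous g := continuous_iff_continuousAt.2 fun x => (hg x).continuousAt
  refine (intervalIntegral.hasDerivAt_integral_of_dominated_loc_of_deriv_le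
    (F := fun k θ => w θ * g (k * c θ)) (F' := fun k θ => w θ * c θ * g' (k * c θ))
    (bound := fun θ => |w θ * c θ| * C) Filter.univ_mem
    (Filter.Eventually.of_forall fun x => (by fun_prop : Continuous _).aestronglyMeasurable)
    ((by fun_prop : Continuous _).intervalIntegrable _ _)
    (by fun_prop : Continuous _).aestronglyMeasurable
    (Filter.Eventually.of_forall fun θ _ x _ => ?_)
    ((by fun_prop : Continuous _).intervalIntegrable _ _)
    (Filter.Eventually.of_forall fun θ _ x _ => ?_)).2
  · rw [Real.norm_eq_abs, abs_mul]
    exact mul_le_mul_of_nonneg_left (hC _) (abs_nonneg _)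
  · exact (((hg _).comp x (hasDerivAt_mul_const (c θ))).const_mul (w θ)).congr_deriv (by ring)

theorem hasDerivAt_J0 (k : ℝ) : HasDerivAt J0 (-J1 k) k := by
  have h := hasDerivAt_integral_mul_comp_mul (a := 0) (b := π) (w := fun _ => 1)
    continuous_const continuous_cos hasDerivAt_cos (by fun_prop)
    (fun x => by simpa using abs_sin_le_one x) k
  simp only [one_mul, mul_neg, intervalIntegral.integral_neg] at h
  exact (h.const_mul (1 / π)).congr_deriv (by rw [J1, mul_neg])

theorem hasDerivAt_J1_eq_integral (k : ℝ) :
    HasDerivAt J1 ((1 / π) * ∫ θ in (0 : ℝ)..π, cos θ ^ 2 * cos (k * cos θ)) k := by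
  have h := hasDerivAt_integral_mul_comp_mul (a := 0) (b := π) continuous_cos continuous_cos
    hasDerivAt_sin continuous_cos abs_cos_le_one k
  exact (h.const_mul (1 / π)).congr_deriv (by simp only [sq, mul_assoc])

theorem mul_integral_sin_sq_mul_cos (k : ℝ) :
    k * ∫ θ in (0 : ℝ)..π, sin θ ^ 2 * cos (k * cos θ) =
      ∫ θ in (0 : ℝ)..π, cos θ * sin (k * cos θ) := by
  have hderiv : ∀ θ ∈ Set.uIcc (0 : ℝ) π, HasDerivAt (fun θ => sin θ * sin (k * cos θ))
      (cos θ * sin (k * cos θ) - k * (sin θ ^ 2 * cos (k * cos θ))) θ := fun θ _ =>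
    ((hasDerivAt_sin θ).mul (((hasDerivAt_cos θ).const_mul k).sin)).congr_deriv (by ring)
  have hftc := intervalIntegral.integral_eq_sub_of_hasDerivAt hderiv
    (by apply Continuous.intervalIntegrable; fun_prop)
  rw [intervalIntegral.integral_sub (by apply Continuous.intervalIntegrable; fun_prop)
    (by apply Continuous.intervalIntegrable; fun_prop),
    intervalIntegral.integral_const_mul] at hftc
  simp only [sin_pi, sin_zero, zero_mul, sub_zero] at hftc
  linarith

theorem hasDerivAt_J1 {k : ℝ} (hk : k ≠ 0) : HasDerivAt J1 (J0 k - J1 k / k) k := by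
  refine (hasDerivAt_J1_eq_integral k).congr_deriv ?_
  have hcos : ∀ θ, cos θ ^ 2 * cos (k * cos θ) = cos (k * cos θ) - sin θ ^ 2 * cos (k * cos θ) :=
    fun θ => by rw [cos_sq']; ring
  simp only [hcos]
  rw [intervalIntegral.integral_sub (by apply Continuous.intervalIntegrable; fun_prop)
    (by apply Continuous.intervalIntegrable; fun_prop), J0, J1,
    ← mul_integral_sin_sq_mul_cos k]
  field_simp

noncomputable def besselEnergy (k : ℝ) : ℝ :=
  (k + 1) * (J0 k ^ 2 + J1 k ^ 2) - (1 + 1 / k) * (J0 k * J1 k)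

theorem hasDerivAt_besselEnergy {k : ℝ} (hk : k ≠ 0) :
    HasDerivAt besselEnergy
      ((1 / k + 2 / k ^ 2) * (J0 k * J1 k) - (J0 k ^ 2 + J1 k ^ 2) / k) k := by
  have h0 := hasDerivAt_J0 k
  have h1 := hasDerivAt_J1 hk
  have hinv : HasDerivAt (fun x => 1 + 1 / x) (-(k ^ 2)⁻¹) k := by
    simpa [one_div] using (hasDerivAt_inv hk).const_add 1
  refine ((((hasDerivAt_id k).add_const 1).mul ((h0.pow 2).add (h1.pow 2))).sub
    (hinv.mul (h0.mul h1))).congr_deriv ?_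
  simp only [id, Pi.mul_apply, Pi.add_apply, Pi.pow_apply]
  field_simp
  ring

theorem antitoneOn_besselEnergy : AntitoneOn besselEnergy (Set.Ici 2) := by
  refine antitoneOn_of_hasDerivWithinAt_nonpos (convex_Ici 2)
    (fun x hx => (hasDerivAt_besselEnergy (by linarith [Set.mem_Ici.1 hx])).continuousAt
      |>.continuousWithinAt)
    (fun x hx => (hasDerivAt_besselEnergy ?_).hasDerivWithinAt) fun x hx => ?_
  · rw [interior_Ici] at hx; linarith [Set.mem_Ioi.1 hx]
  rw [interior_Ici, Set.mem_Ioi] at hx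
  have hx0 : 0 < x := by linarith
  have hprod : |J0 x * J1 x| ≤ (J0 x ^ 2 + J1 x ^ 2) / 2 := by
    rw [abs_mul]; nlinarith [sq_nonneg (|J0 x| - |J1 x|), sq_abs (J0 x), sq_abs (J1 x)]
  have hcoef : 1 / x + 2 / x ^ 2 ≤ 2 / x := by
    rw [div_add_div _ _ hx0.ne' (by positivity), div_le_div_iff₀ (by positivity) hx0]
    nlinarith
  have hbound : (1 / x + 2 / x ^ 2) * (J0 x * J1 x) ≤ (J0 x ^ 2 + J1 x ^ 2) / x :=
    calc (1 / x + 2 / x ^ 2) * (J0 x * J1 x) ≤ (1 / x + 2 / x ^ 2) * |J0 x * J1 x| :=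
          mul_le_mul_of_nonneg_left (le_abs_self _) (by positivity)
      _ ≤ 2 / x * ((J0 x ^ 2 + J1 x ^ 2) / 2) :=
          mul_le_mul hcoef hprod (abs_nonneg _) (by positivity)
      _ = (J0 x ^ 2 + J1 x ^ 2) / x := by ring
  linarith

theorem mul_J0_sq_le_besselEnergy {k : ℝ} (hk : 1 ≤ k) :
    (k + 1 / (2 * k)) * J0 k ^ 2 ≤ besselEnergy k := by
  have hk0 : 0 < k := by linarith
  have key : (2 * k - 1) * (2 * k * (besselEnergy k - (k + 1 / (2 * k)) * J0 k ^ 2)) =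
      ((2 * k - 1) * J0 k - (k + 1) * J1 k) ^ 2 + (k + 1) * (k - 1) * (4 * k + 1) * J1 k ^ 2 := by
    unfold besselEnergy
    field_simp
    ring
  have hrhs : 0 ≤ ((2 * k - 1) * J0 k - (k + 1) * J1 k) ^ 2 +
      (k + 1) * (k - 1) * (4 * k + 1) * J1 k ^ 2 := by
    have : 0 ≤ k - 1 := by linarith
    positivity
  rw [← key, mul_nonneg_iff_of_pos_left (by linarith),
    mul_nonneg_iff_of_pos_left (by positivity)] at hrhs
  linarith

theorem besselEnergy_two_le_one : besselEnergy 2 ≤ 1 := by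
  have hJ0 : 2 / 9 ≤ J0 2 ∧ J0 2 ≤ 43 / 192 := by
    have h3 := J0_sub_J0Taylor_alternating 3 2
    have h4 := J0_sub_J0Taylor_alternating 4 2
    norm_num [J0Taylor, sum_range_succ, Nat.factorial] at h3 h4
    constructor <;> linarith
  have hJ1 : 83 / 144 ≤ J1 2 ∧ J1 2 ≤ 7 / 12 := by
    have h2 := mul_J1_sub_J1Taylor_alternating 2 2
    have h3 := mul_J1_sub_J1Taylor_alternating 3 2
    norm_num [J1Taylor, sum_range_succ, Nat.factorial] at h2 h3
    constructor <;> linarith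
  obtain ⟨h0l, h0u⟩ := hJ0
  obtain ⟨h1l, h1u⟩ := hJ1
  have hprod : 2 / 9 * (83 / 144) ≤ J0 2 * J1 2 := mul_le_mul h0l h1l (by norm_num) (by linarith)
  rw [besselEnergy]
  nlinarith

theorem J0_pow_four_mul_le_of_two_le {k : ℝ} (hk : 2 ≤ k) : J0 k ^ 4 * (1 + k ^ 2) ≤ 1 := by
  have hk0 : 0 < k := by linarith
  have hE : (k + 1 / (2 * k)) * J0 k ^ 2 ≤ 1 :=
    (mul_J0_sq_le_besselEnergy (by linarith)).trans
      ((antitoneOn_besselEnergy Set.self_mem_Ici hk hk).trans besselEnergy_two_le_one)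
  have hweight : 1 + k ^ 2 ≤ (k + 1 / (2 * k)) ^ 2 := by
    have : (k + 1 / (2 * k)) ^ 2 = 1 + k ^ 2 + (1 / (2 * k)) ^ 2 := by field_simp; ring
    nlinarith [sq_nonneg (1 / (2 * k))]
  calc J0 k ^ 4 * (1 + k ^ 2) ≤ J0 k ^ 4 * (k + 1 / (2 * k)) ^ 2 := by gcongr
    _ = ((k + 1 / (2 * k)) * J0 k ^ 2) ^ 2 := by ring
    _ ≤ 1 := pow_le_one₀ (by positivity) hE

theorem one_sub_div_eight_pow_eight_mul_le {x : ℝ} (hx₀ : -1 ≤ x) (hx : x ≤ 8) :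
    (1 - x / 8) ^ 8 * (1 + x) ≤ 1 := by
  have hbase : (1 - x / 8) ^ 8 ≤ exp (-x) :=
    calc (1 - x / 8) ^ 8 ≤ exp (-x / 8) ^ 8 := by
          gcongr
          · linarith
          · linarith [add_one_le_exp (-x / 8)]
      _ = exp (-x) := by rw [← exp_nat_mul]; ring_nf
  calc (1 - x / 8) ^ 8 * (1 + x) ≤ exp (-x) * exp x := by
        gcongr
        · linarith
        · linarith [add_one_le_exp x]
    _ = 1 := by rw [← exp_add, neg_add_cancel, exp_zero]

theorem J0_pow_four_mul_le_of_sq_le_four {k : ℝ} (hk : k ^ 2 ≤ 4) :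
    J0 k ^ 4 * (1 + k ^ 2) ≤ 1 := by
  have hlow : 1 - k ^ 2 / 4 ≤ J0 k := by
    have h := J0_sub_J0Taylor_alternating 1 k
    norm_num [J0Taylor, sum_range_succ] at h
    linarith
  have hup : J0 k ≤ (1 - k ^ 2 / 8) ^ 2 := by
    have h := J0_sub_J0Taylor_alternating 2 k
    norm_num [J0Taylor, sum_range_succ] at h
    nlinarith
  calc J0 k ^ 4 * (1 + k ^ 2) ≤ ((1 - k ^ 2 / 8) ^ 2) ^ 4 * (1 + k ^ 2) := by
        gcongr
        linarith
    _ = (1 - k ^ 2 / 8) ^ 8 * (1 + k ^ 2) := by ring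
    _ ≤ 1 := one_sub_div_eight_pow_eight_mul_le (by nlinarith) (by linarith)

theorem J0_abs (k : ℝ) : J0 |k| = J0 k := by
  rcases abs_choice k with h | h <;> simp [h, J0]

theorem abs_le_rpow_neg_quarter_of_pow_four_mul_le {y A : ℝ} (hA : 0 < A) (h : y ^ 4 * A ≤ 1) :
    |y| ≤ A ^ (-(1 : ℝ) / 4) := by
  have h4 : |y| ^ 4 ≤ A⁻¹ := by
    rw [pow_abs, abs_of_nonneg (by positivity), ← one_div]
    exact (le_div_iff₀ hA).2 h
  calc |y| = (|y| ^ 4) ^ ((4 : ℕ)⁻¹ : ℝ) := (pow_rpow_inv_natCast (abs_nonneg y) four_ne_zero).symm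
    _ ≤ A⁻¹ ^ ((4 : ℕ)⁻¹ : ℝ) := by gcongr
    _ = A ^ (-(1 : ℝ) / 4) := by
      rw [inv_rpow hA.le, ← rpow_neg hA.le]
      norm_num

theorem J0_decay_bound (k : ℝ) : |J0 k| ≤ (1 + k ^ 2) ^ (-(1:ℝ)/4) := by
  refine abs_le_rpow_neg_quarter_of_pow_four_mul_le (by positivity) ?_
  rw [← J0_abs, ← sq_abs k]
  rcases le_total |k| 2 with hk | hk
  · exact J0_pow_four_mul_le_of_sq_le_four (by nlinarith [abs_nonneg k])
  · exact J0_pow_four_mul_le_of_two_le hk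
end

section
/- The function J⁰ satisfies the zeroth-order Bessel differential equation: for every real k, k²·(J⁰)''(k) + k·(J⁰)'(k) + k²·J⁰(k) = 0, together with the initial conditions J⁰(0) = 1 and (J⁰)'(0) = 0. -/
open MeasureTheory Real

/-
Differentiating under the integral sign (the integrands are smooth and bounded) gives
`π J⁰' = -∫₀^π sin(k cos θ) cos θ dθ` and `π J⁰'' = -∫₀^π cos(k cos θ) cos² θ dθ`.
Since `1 - cos² θ = sin² θ`, the combination `π (k² J⁰'' + k J⁰' + k² J⁰)` is the integral
of `k² sin² θ cos(k cos θ) - k cos θ sin(k cos θ)`, the θ-derivative of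
`-k sin θ sin(k cos θ)`, which vanishes at both `0` and `π`.
-/

section ParametricIntegral

variable {E : Type*} [NormedAddCommGroup E] [NormedSpace ℝ E]

theorem hasDerivAt_intervalIntegral_of_continuous_of_deriv_bounded {F F' : ℝ → ℝ → E}
    {a b C : ℝ} (hF : ∀ x, Continuous (F x)) (hF' : ∀ x, Continuous (F' x))
    (h_bound : ∀ x t, ‖F' x t‖ ≤ C)
    (h_diff : ∀ x t, HasDerivAt (fun x => F x t) (F' x t) x) (x₀ : ℝ) :
    HasDerivAt (fun x => ∫ t in a..b, F x t) (∫ t in a..b, F' x₀ t) x₀ :=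
  (intervalIntegral.hasDerivAt_integral_of_dominated_loc_of_deriv_le (bound := fun _ => C)
    Filter.univ_mem (.of_forall fun x => (hF x).aestronglyMeasurable)
    ((hF x₀).intervalIntegrable _ _) (hF' x₀).aestronglyMeasurable
    (.of_forall fun t _ x _ => h_bound x t) intervalIntegrable_const
    (.of_forall fun t _ x _ => h_diff x t)).2

end ParametricIntegral

section IntegralsOfCosCos

variable {a b : ℝ}

theorem hasDerivAt_integral_cos_mul_cos (k : ℝ) :
    HasDerivAt (fun k => ∫ θ in a..b, cos (k * cos θ))
      (-∫ θ in a..b, sin (k * cos θ) * cos θ) k := by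
  rw [← intervalIntegral.integral_neg]
  refine hasDerivAt_intervalIntegral_of_continuous_of_deriv_bounded
    (F := fun k θ => cos (k * cos θ)) (F' := fun k θ => -(sin (k * cos θ) * cos θ)) (C := 1)
    (fun _ => by fun_prop) (fun _ => by fun_prop) (fun x t => ?_) (fun x t => ?_) k
  · rw [norm_neg, norm_mul]
    exact mul_le_one₀ (abs_sin_le_one _) (norm_nonneg _) (abs_cos_le_one t)
  · simpa using (hasDerivAt_mul_const (cos t)).cos (x := x)

theorem hasDerivAt_integral_sin_mul_cos_mul_cos (k : ℝ) :
    HasDerivAt (fun k => ∫ θ in a..b, sin (k * cos θ) * cos θ)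
      (∫ θ in a..b, cos (k * cos θ) * cos θ ^ 2) k := by
  refine hasDerivAt_intervalIntegral_of_continuous_of_deriv_bounded
    (F := fun k θ => sin (k * cos θ) * cos θ) (F' := fun k θ => cos (k * cos θ) * cos θ ^ 2)
    (C := 1)
    (fun _ => by fun_prop) (fun _ => by fun_prop) (fun x t => ?_) (fun x t => ?_) k
  · rw [norm_mul, norm_pow]
    exact mul_le_one₀ (abs_cos_le_one _) (by positivity)
      (pow_le_one₀ (norm_nonneg _) (abs_cos_le_one t))
  · exact (((hasDerivAt_mul_const (cos t)).sin (x := x)).mul_const (cos t)).congr_deriv (by ring)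

theorem integral_bessel_combination (k : ℝ) :
    k ^ 2 * (∫ θ in (0:ℝ)..π, cos (k * cos θ) * cos θ ^ 2)
      + k * (∫ θ in (0:ℝ)..π, sin (k * cos θ) * cos θ)
      = k ^ 2 * ∫ θ in (0:ℝ)..π, cos (k * cos θ) := by
  have h_antideriv : ∀ θ, HasDerivAt (fun θ => -(k * sin θ * sin (k * cos θ)))
      (k ^ 2 * cos (k * cos θ) - k ^ 2 * (cos (k * cos θ) * cos θ ^ 2)
        - k * (sin (k * cos θ) * cos θ)) θ := fun θ => by
    refine (((hasDerivAt_sin θ).const_mul k).mul ((hasDerivAt_cos θ).const_mul k).sin).neg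
      |>.congr_deriv ?_
    linear_combination (k ^ 2 * cos (k * cos θ)) * sin_sq_add_cos_sq θ
  have h_zero := intervalIntegral.integral_eq_sub_of_hasDerivAt (fun θ _ => h_antideriv θ)
    ((by fun_prop : Continuous _).intervalIntegrable 0 π)
  have hi : ∀ f : ℝ → ℝ, Continuous f → IntervalIntegrable f volume 0 π :=
    fun f hf => hf.intervalIntegrable 0 π
  rw [intervalIntegral.integral_sub ((hi _ (by fun_prop)).sub (hi _ (by fun_prop)))
      (hi _ (by fun_prop)),
    intervalIntegral.integral_sub (hi _ (by fun_prop)) (hi _ (by fun_prop)),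
    intervalIntegral.integral_const_mul, intervalIntegral.integral_const_mul,
    intervalIntegral.integral_const_mul] at h_zero
  simp only [sin_zero, sin_pi, cos_zero, cos_pi] at h_zero
  linarith

end IntegralsOfCosCos

theorem hasDerivAt_J0_s5 (k : ℝ) :
    HasDerivAt J0 (-(1 / π) * ∫ θ in (0:ℝ)..π, sin (k * cos θ) * cos θ) k :=
  ((hasDerivAt_integral_cos_mul_cos k).const_mul (1 / π)).congr_deriv (by ring)

theorem deriv_J0 : deriv J0 = fun k => -(1 / π) * ∫ θ in (0:ℝ)..π, sin (k * cos θ) * cos θ :=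
  funext fun k => (hasDerivAt_J0_s5 k).deriv

theorem hasDerivAt_deriv_J0 (k : ℝ) :
    HasDerivAt (deriv J0) (-(1 / π) * ∫ θ in (0:ℝ)..π, cos (k * cos θ) * cos θ ^ 2) k := by
  rw [deriv_J0]
  exact (hasDerivAt_integral_sin_mul_cos_mul_cos k).const_mul _

theorem J0_bessel_ODE :
    (∀ k : ℝ, k ^ 2 * deriv (deriv J0) k + k * deriv J0 k + k ^ 2 * J0 k = 0) ∧
    J0 0 = 1 ∧ deriv J0 0 = 0 := by
  refine ⟨fun k => ?_, by simp [J0, pi_ne_zero], by simp [deriv_J0]⟩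
  rw [(hasDerivAt_deriv_J0 k).deriv, (hasDerivAt_J0_s5 k).deriv, J0]
  linear_combination (-(1 / π)) * integral_bessel_combination k
end
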